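/- arXiv:2302.10866 — 2 statements merged into one kernel-verified Lean document; each statement's English description precedes it below -/
import Mathlib

section
/- Matrix form of the Hyena recurrence: fix a sequence length L, order N ≥ 1, filters h^1, …, h^N : Fin L → ℝ, and projections x^1, …, x^N, v : Fin L → ℝ. Let D^n = diag(x^n) be the L×L diagonal matrix with entries x^n, and let S^n be the lower-triangular Toeplitz matrix with (S^n)_{t,s} = h^n_{t−s} for s ≤ t and 0 otherwise. Then the output y of the Hyena recurrence satisfies y = D^N S^N ⋯ D^2 S^2 D^1 S^1 v (as a matrix-vector product). -/
open Finset Matrix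

/-- Causal convolution: `(h ⋆ z)_t = ∑_{s ≤ t} h_{t-s} · z_s`, indices as naturals. -/
def cconv {L : ℕ} (h z : Fin L → ℝ) (t : Fin L) : ℝ :=
  ∑ s ∈ Finset.univ.filter (fun s : Fin L => s ≤ t),
    h ⟨t.1 - s.1, Nat.lt_of_le_of_lt (Nat.sub_le _ _) t.2⟩ * z s

/-- Order-`N` Hyena recurrence: `z^1 = v`, `z^{n+1}_t = x^n_t · (h^n ⋆ z^n)_t`,
output `y = z^{N+1}` (filters and projections are 0-indexed). -/
def hyena {L : ℕ} : (N : ℕ) → (Fin N → Fin L → ℝ) → (Fin N → Fin L → ℝ) →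
    (Fin L → ℝ) → Fin L → ℝ
  | 0, _, _, v => v
  | N + 1, h, x, v => fun t =>
      x (Fin.last N) t *
        cconv (h (Fin.last N))
          (hyena N (fun n => h n.castSucc) (fun n => x n.castSucc) v) t

/-- Lower-triangular Toeplitz matrix of a filter:
`(S_h)_{t,s} = h_{t-s}` if `s ≤ t`, and `0` otherwise. -/
def toeplitz {L : ℕ} (h : Fin L → ℝ) : Matrix (Fin L) (Fin L) ℝ :=
  Matrix.of fun t s : Fin L =>
    if s ≤ t then h ⟨t.1 - s.1, Nat.lt_of_le_of_lt (Nat.sub_le _ _) t.2⟩ else 0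

/-- Data-controlled Hyena matrix: `H = D^N S^N ⋯ D^2 S^2 D^1 S^1` where
`D^n = diag(x^n)` and `S^n` is the Toeplitz matrix of `h^n`. -/
def hyenaMatrix {L : ℕ} : (N : ℕ) → (Fin N → Fin L → ℝ) → (Fin N → Fin L → ℝ) →
    Matrix (Fin L) (Fin L) ℝ
  | 0, _, _ => 1
  | N + 1, h, x =>
      Matrix.diagonal (x (Fin.last N)) * toeplitz (h (Fin.last N)) *
        hyenaMatrix N (fun n => h n.castSucc) (fun n => x n.castSucc)

lemma cconv_eq_mulVec {L : ℕ} (h z : Fin L → ℝ) :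
    cconv h z = (toeplitz h).mulVec z := by
  funext t
  simp only [cconv, Matrix.mulVec, dotProduct, toeplitz, Matrix.of_apply]
  rw [Finset.sum_filter]
  apply Finset.sum_congr rfl
  intro s _
  split <;> simp

/-- Matrix form of the Hyena recurrence: `y = D^N S^N ⋯ D^2 S^2 D^1 S^1 v`. -/
theorem hyena_eq_hyenaMatrix_mulVec {L N : ℕ} (hN : 1 ≤ N)
    (h x : Fin N → Fin L → ℝ) (v : Fin L → ℝ) :
    hyena N h x v = (hyenaMatrix N h x).mulVec v := by
  clear hN
  induction N with
  | zero => simp [hyena, hyenaMatrix]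
  | succ N ih =>
    funext t
    rw [hyena, hyenaMatrix, ih, cconv_eq_mulVec, ← Matrix.mulVec_mulVec,
      ← Matrix.mulVec_mulVec, Matrix.mulVec_diagonal]
end

section
/- H3 realizes a surrogate attention matrix via a data-controlled decomposition: fix a sequence length L, filters φ, ψ : Fin L → ℝ, and sequences q, k, v : Fin L → ℝ. Define z_t = k_t · (φ ⋆ v)_t and y_t = q_t · (ψ ⋆ z)_t. Let D_q = diag(q), D_k = diag(k), and let S_φ, S_ψ be the lower-triangular Toeplitz matrices of φ and ψ. Then y = D_q S_ψ D_k S_φ v; in particular the H3 mechanism coincides with the order-2 Hyena operator with projections (v, x^1, x^2) = (v, k, q) and filters (h^1, h^2) = (φ, ψ). -/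
open Finset Matrix

lemma toeplitz_mulVec {L : ℕ} (h w : Fin L → ℝ) :
    (toeplitz h).mulVec w = cconv h w := by
  funext t
  simp [Matrix.mulVec, dotProduct, toeplitz, cconv, Finset.sum_filter, ite_mul]

/-- H3 realizes a surrogate attention matrix via a data-controlled decomposition:
with `z_t = k_t·(φ ⋆ v)_t` and `y_t = q_t·(ψ ⋆ z)_t`, one has
`y = D_q S_ψ D_k S_φ v`, and `y` coincides with the order-2 Hyena operator with
projections `(v, k, q)` and filters `(φ, ψ)`. -/
theorem h3_decomposition {L : ℕ} (φ ψ q k v : Fin L → ℝ)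
    (z y : Fin L → ℝ)
    (hz : ∀ t, z t = k t * cconv φ v t)
    (hy : ∀ t, y t = q t * cconv ψ z t) :
    y = (Matrix.diagonal q * toeplitz ψ * Matrix.diagonal k * toeplitz φ).mulVec v ∧
    y = hyena 2 ![φ, ψ] ![k, q] v := by
  have hze : z = fun t => k t * cconv φ v t := funext hz
  constructor
  · funext t
    rw [Matrix.mul_assoc, Matrix.mul_assoc, ← Matrix.mulVec_mulVec,
      ← Matrix.mulVec_mulVec, ← Matrix.mulVec_mulVec, toeplitz_mulVec]
    have hd : Matrix.diagonal k *ᵥ cconv φ v = z := by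
      funext s; simp [Matrix.mulVec_diagonal, hz]
    rw [toeplitz_mulVec, hd, Matrix.mulVec_diagonal, hy]
  · funext t
    rw [hy t, hze]
    simp [hyena, Fin.last]
end
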